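/- Let 𝔉 be a maximal commuting family of i-boxes in [a,b] and fix a color j ∈ {i_a,…,i_b}. Let 𝔉_j = {[x,y] ∈ 𝔉 : i_x = j} and m = |{k ∈ [a,b] : i_k = j}|. Then 𝔉_j can be uniquely enumerated as an increasing sequence of i-boxes [x₁,y₁] ⊂ [x₂,y₂] ⊂ … ⊂ [x_m,y_m] such that |[x_k,y_k]_φ| = k for each k, consecutive boxes satisfy [x_k,y_k] = [(x_{k+1})₊, y_{k+1}] or [x_{k+1}, (y_{k+1})₋], and [x_m,y_m] = [a(j)⁺, b(j)⁻] is the unique frozen box of color j. -/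
import Mathlib


namespace IBoxes

variable {I : Type*}

/-- `gapBelow i x m` encodes `x₋ < m` : no position `t` with `m ≤ t < x` has the color of `x`. -/
def gapBelow (i : ℤ → I) (x m : ℤ) : Prop := ∀ t : ℤ, m ≤ t → t < x → i t ≠ i x

/-- `gapAbove i y m` encodes `m < y₊` : no position `t` with `y < t ≤ m` has the color of `y`. -/
def gapAbove (i : ℤ → I) (y m : ℤ) : Prop := ∀ t : ℤ, y < t → t ≤ m → i t ≠ i y

/-- `[x,y]` is an `i`-box. -/
def IsBox (i : ℤ → I) (x y : ℤ) : Prop := x ≤ y ∧ i x = i y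

/-- Two `i`-boxes commute: `(x₁)₋ < x₂ ≤ y₂ < (y₁)₊` or `(x₂)₋ < x₁ ≤ y₁ < (y₂)₊`. -/
def BoxCommute (i : ℤ → I) (x₁ y₁ x₂ y₂ : ℤ) : Prop :=
  (gapBelow i x₁ x₂ ∧ gapAbove i y₁ y₂) ∨ (gapBelow i x₂ x₁ ∧ gapAbove i y₂ y₁)

/-- A commuting family of `i`-boxes. -/
def CommFamily (i : ℤ → I) (F : Set (ℤ × ℤ)) : Prop :=
  (∀ p ∈ F, IsBox i p.1 p.2) ∧ ∀ p ∈ F, ∀ q ∈ F, BoxCommute i p.1 p.2 q.1 q.2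

/-- All boxes of the family lie in `[a,b]`. -/
def InRange (a b : ℤ) (F : Set (ℤ × ℤ)) : Prop := ∀ p ∈ F, a ≤ p.1 ∧ p.2 ≤ b

/-- A maximal commuting family of `i`-boxes in `[a,b]`. -/
def MaxCommFamily (i : ℤ → I) (a b : ℤ) (F : Set (ℤ × ℤ)) : Prop :=
  CommFamily i F ∧ InRange a b F ∧
    ∀ G : Set (ℤ × ℤ), CommFamily i G → InRange a b G → F ⊆ G → F = G

/-- `x' = x₊`, the next position with the color of `x`. -/
def NextSame (i : ℤ → I) (x x' : ℤ) : Prop :=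
  x < x' ∧ i x' = i x ∧ ∀ t : ℤ, x < t → t < x' → i t ≠ i x

/-- `y' = y₋`, the previous position with the color of `y`. -/
def PrevSame (i : ℤ → I) (y y' : ℤ) : Prop :=
  y' < y ∧ i y' = i y ∧ ∀ t : ℤ, y' < t → t < y → i t ≠ i y

/-- `p` is frozen in `[a,b]` : `(p.1)₋ < a` and `b < (p.2)₊`. -/
def Frozen (i : ℤ → I) (a b : ℤ) (p : ℤ × ℤ) : Prop :=
  gapBelow i p.1 a ∧ gapAbove i p.2 b

/-- `p = [lo, hi}`, i.e. `p = [lo, hi(i lo)⁻]`. -/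
def IsLBox (i : ℤ → I) (lo hi : ℤ) (p : ℤ × ℤ) : Prop :=
  p.1 = lo ∧ lo ≤ p.2 ∧ p.2 ≤ hi ∧ i p.2 = i lo ∧ ∀ t : ℤ, p.2 < t → t ≤ hi → i t ≠ i lo

/-- `p = {lo, hi]`, i.e. `p = [lo(i hi)⁺, hi]`. -/
def IsRBox (i : ℤ → I) (lo hi : ℤ) (p : ℤ × ℤ) : Prop :=
  p.2 = hi ∧ lo ≤ p.1 ∧ p.1 ≤ hi ∧ i p.1 = i hi ∧ ∀ t : ℤ, lo ≤ t → t < p.1 → i t ≠ i hi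

/-- An admissible chain of `i`-boxes `𝔠_k = box k` (for `1 ≤ k ≤ l`) with envelopes
`𝔠̃_k = [lo k, hi k]`. -/
structure AdmissibleChain (i : ℤ → I) (l : ℕ) where
  lo : ℕ → ℤ
  hi : ℕ → ℤ
  box : ℕ → ℤ × ℤ
  size : ∀ k : ℕ, 1 ≤ k → k ≤ l → hi k = lo k + (k : ℤ) - 1
  step : ∀ k : ℕ, 1 ≤ k → k < l →
    (lo (k + 1) = lo k - 1 ∧ hi (k + 1) = hi k) ∨
    (lo (k + 1) = lo k ∧ hi (k + 1) = hi k + 1)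
  box_spec : ∀ k : ℕ, 1 ≤ k → k ≤ l →
    IsLBox i (lo k) (hi k) (box k) ∨ IsRBox i (lo k) (hi k) (box k)
  cover : ∀ k : ℕ, 1 ≤ k → k ≤ l →
    Set.Icc (lo k) (hi k) = ⋃ j ∈ Set.Icc 1 k, Set.Icc ((box j).1) ((box j).2)

/-- The set of boxes appearing in an admissible chain. -/
def boxesOf {i : ℤ → I} {l : ℕ} (C : AdmissibleChain i l) : Set (ℤ × ℤ) :=
  {p | ∃ k : ℕ, 1 ≤ k ∧ k ≤ l ∧ C.box k = p}

/-- The envelope `𝔠̃_k` as a set, with `𝔠̃_0 = ∅`. -/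
def env {i : ℤ → I} {l : ℕ} (C : AdmissibleChain i l) (k : ℕ) : Set ℤ :=
  if k = 0 then ∅ else Set.Icc (C.lo k) (C.hi k)

/-- `z` is the effective end of the box `(x,y)` of the maximal commuting family `F` in `[a,b]`. -/
def IsEffectiveEnd (i : ℤ → I) (a b : ℤ) (F : Set (ℤ × ℤ)) (x y z : ℤ) : Prop :=
  z ∈ ({x, y} : Set ℤ) ∧
    ∀ (l : ℕ) (C : AdmissibleChain i l), C.lo l = a → C.hi l = b → boxesOf C = F →
      ∀ k : ℕ, 1 ≤ k → k ≤ l → C.box k = (x, y) →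
        ({z} : Set ℤ) = env C k \ env C (k - 1)

/-- `[x,y]` is in the left corner of `F`: `[x₊,y] ∈ F` and `[x,y₊] ∈ F`. -/
def LeftCorner (i : ℤ → I) (F : Set (ℤ × ℤ)) (x y : ℤ) : Prop :=
  (∃ x', NextSame i x x' ∧ (x', y) ∈ F) ∧ (∃ y', NextSame i y y' ∧ (x, y') ∈ F)

/-- `[x,y]` is in the right corner of `F`: `[x,y₋] ∈ F` and `[x₋,y] ∈ F`. -/
def RightCorner (i : ℤ → I) (F : Set (ℤ × ℤ)) (x y : ℤ) : Prop :=
  (∃ y', PrevSame i y y' ∧ (x, y') ∈ F) ∧ (∃ x', PrevSame i x x' ∧ (x', y) ∈ F)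

/-- The number of positions of color `j` in `[x,y]`. -/
noncomputable def colorCount (i : ℤ → I) (j : I) (x y : ℤ) : ℕ :=
  {s : ℤ | x ≤ s ∧ s ≤ y ∧ i s = j}.ncard

/-- `Enum i a b j F m f` : `f` enumerates `F_j = {[x,y] ∈ F : i x = j}` as in Lemma 2.24:
the boxes `f 1, …, f m` exhaust `F_j`, `|[f k]_φ| = k`, consecutive boxes differ by one step
of the same color, and `f m = [a(j)⁺, b(j)⁻]`. -/
def Enum (i : ℤ → I) (a b : ℤ) (j : I) (F : Set (ℤ × ℤ)) (m : ℕ) (f : ℕ → ℤ × ℤ) : Prop :=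
  ({p ∈ F | i p.1 = j} = {p | ∃ k : ℕ, 1 ≤ k ∧ k ≤ m ∧ f k = p}) ∧
  (∀ k : ℕ, 1 ≤ k → k ≤ m → colorCount i j (f k).1 (f k).2 = k) ∧
  (∀ k : ℕ, 1 ≤ k → k < m →
    (NextSame i (f (k + 1)).1 (f k).1 ∧ (f k).2 = (f (k + 1)).2) ∨
    ((f k).1 = (f (k + 1)).1 ∧ PrevSame i (f (k + 1)).2 (f k).2)) ∧
  (a ≤ (f m).1 ∧ i (f m).1 = j ∧ (∀ t : ℤ, a ≤ t → t < (f m).1 → i t ≠ j) ∧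
   (f m).2 ≤ b ∧ i (f m).2 = j ∧ (∀ t : ℤ, (f m).2 < t → t ≤ b → i t ≠ j))

section Aux
variable {i : ℤ → I} {j : I}

private lemma phi_finite (i : ℤ → I) (j : I) (x y : ℤ) :
    {s : ℤ | x ≤ s ∧ s ≤ y ∧ i s = j}.Finite :=
  (Set.finite_Icc x y).subset fun s hs => Set.mem_Icc.mpr ⟨hs.1, hs.2.1⟩

private lemma boxCommute_self (i : ℤ → I) (x y : ℤ) : BoxCommute i x y x y :=
  Or.inl ⟨fun t ht1 ht2 => absurd ht1 (not_le.mpr ht2),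
          fun t ht1 ht2 => absurd ht2 (not_le.mpr ht1)⟩

private lemma nested {F : Set (ℤ × ℤ)} (hF : CommFamily i F) {p q : ℤ × ℤ}
    (hp : p ∈ F) (hq : q ∈ F) (hpj : i p.1 = j) (hqj : i q.1 = j) :
    (p.1 ≤ q.1 ∧ q.2 ≤ p.2) ∨ (q.1 ≤ p.1 ∧ p.2 ≤ q.2) := by
  have hbp := hF.1 p hp
  have hbq := hF.1 q hq
  rcases hF.2 p hp q hq with ⟨h1, h2⟩ | ⟨h1, h2⟩
  · left
    constructor
    · by_contra h
      exact h1 q.1 le_rfl (lt_of_not_ge h) (hqj.trans hpj.symm)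
    · by_contra h
      exact h2 q.2 (lt_of_not_ge h) le_rfl
        (((hbq.2.symm.trans hqj).trans hpj.symm).trans hbp.2)
  · right
    constructor
    · by_contra h
      exact h1 p.1 le_rfl (lt_of_not_ge h) (hpj.trans hqj.symm)
    · by_contra h
      exact h2 p.2 (lt_of_not_ge h) le_rfl
        (((hbp.2.symm.trans hpj).trans hqj.symm).trans hbq.2)

private lemma eq_of_count {F : Set (ℤ × ℤ)} (hF : CommFamily i F) {p q : ℤ × ℤ}
    (hp : p ∈ F) (hq : q ∈ F) (hpj : i p.1 = j) (hqj : i q.1 = j)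
    (hc : colorCount i j p.1 p.2 = colorCount i j q.1 q.2) : p = q := by
  have key : ∀ r s : ℤ × ℤ, r ∈ F → s ∈ F → i r.1 = j → i s.1 = j → r.1 ≤ s.1 → s.2 ≤ r.2 →
      colorCount i j r.1 r.2 = colorCount i j s.1 s.2 → r = s := by
    intro r s hr hs hrj hsj h1 h2 hcc
    have hbr := hF.1 r hr
    have hsub : {t : ℤ | s.1 ≤ t ∧ t ≤ s.2 ∧ i t = j} ⊆ {t : ℤ | r.1 ≤ t ∧ t ≤ r.2 ∧ i t = j} :=
      fun t ht => ⟨le_trans h1 ht.1, le_trans ht.2.1 h2, ht.2.2⟩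
    have heq := Set.eq_of_subset_of_ncard_le hsub (le_of_eq hcc) (phi_finite i j r.1 r.2)
    have hr1 : r.1 ∈ {t : ℤ | s.1 ≤ t ∧ t ≤ s.2 ∧ i t = j} := by
      rw [heq]; exact ⟨le_rfl, hbr.1, hrj⟩
    have hr2 : r.2 ∈ {t : ℤ | s.1 ≤ t ∧ t ≤ s.2 ∧ i t = j} := by
      rw [heq]; exact ⟨hbr.1, le_rfl, hbr.2.symm.trans hrj⟩
    exact Prod.ext (le_antisymm h1 hr1.1) (le_antisymm hr2.2.1 h2)
  rcases nested hF hp hq hpj hqj with ⟨h1, h2⟩ | ⟨h1, h2⟩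
  · exact key p q hp hq hpj hqj h1 h2 hc
  · exact (key q p hq hp hqj hpj h1 h2 hc.symm).symm

private lemma exchange {x y x' y'' u v u' v' : ℤ}
    (hx' : NextSame i x x') (hy'' : PrevSame i y y'')
    (hBC : BoxCommute i x y u v) (hBC' : BoxCommute i x y u' v')
    (hnE : ¬ BoxCommute i x' y u v) (hnF : ¬ BoxCommute i x y'' u' v')
    (hCC' : BoxCommute i u v u' v') : False := by
  rw [BoxCommute, not_or] at hnE hnF
  obtain ⟨hnE1, hnE2⟩ := hnE
  obtain ⟨hnF1, hnF2⟩ := hnF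
  obtain ⟨hg1, hg2⟩ : gapBelow i x u ∧ gapAbove i y v := by
    rcases hBC with h | ⟨h1, h2⟩
    · exact h
    · exact absurd ⟨fun t ht1 ht2 => h1 t (le_of_lt (lt_of_lt_of_le hx'.1 ht1)) ht2, h2⟩ hnE2
  have hux : u ≤ x := by
    have hng : ¬ gapBelow i x' u := fun h => hnE1 ⟨h, hg2⟩
    rw [gapBelow] at hng; push_neg at hng
    obtain ⟨t, ht1, ht2, ht3⟩ := hng
    have htx : i t = i x := ht3.trans hx'.2.1
    rcases lt_trichotomy t x with h | h | h
    · exact absurd htx (hg1 t ht1 h)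
    · exact h ▸ ht1
    · exact absurd htx (hx'.2.2 t h ht2)
  obtain ⟨w, hw1, hw2, hw3⟩ : ∃ w, v < w ∧ w ≤ y ∧ i w = i v := by
    have hvac : gapBelow i u x' := fun t ht1 ht2 =>
      absurd ht1 (not_le.mpr (lt_trans (lt_of_lt_of_le ht2 hux) hx'.1))
    have hng : ¬ gapAbove i v y := fun h => hnE2 ⟨hvac, h⟩
    rw [gapAbove] at hng; push_neg at hng
    exact hng
  obtain ⟨hg1', hg2'⟩ : gapBelow i x u' ∧ gapAbove i y v' := by
    rcases hBC' with h | ⟨h1, h2⟩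
    · exact h
    · exact absurd ⟨h1, fun t ht1 ht2 => h2 t ht1 (le_trans ht2 hy''.1.le)⟩ hnF2
  have hyv' : y ≤ v' := by
    have hng : ¬ gapAbove i y'' v' := fun h => hnF1 ⟨hg1', h⟩
    rw [gapAbove] at hng; push_neg at hng
    obtain ⟨t, ht1, ht2, ht3⟩ := hng
    have hty : i t = i y := ht3.trans hy''.2.1
    rcases lt_trichotomy t y with h | h | h
    · exact absurd hty (hy''.2.2 t ht1 h)
    · exact h ▸ ht2
    · exact absurd hty (hg2' t h ht2)
  obtain ⟨w', hw'1, hw'2, hw'3⟩ : ∃ w, x ≤ w ∧ w < u' ∧ i w = i u' := by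
    have hvac : gapAbove i v' y'' := fun t ht1 ht2 =>
      absurd ht2 (not_le.mpr (lt_trans (lt_of_lt_of_le hy''.1 hyv') ht1))
    have hng : ¬ gapBelow i u' x := fun h => hnF2 ⟨h, hvac⟩
    rw [gapBelow] at hng; push_neg at hng
    exact hng
  rcases hCC' with ⟨_, h⟩ | ⟨h, _⟩
  · exact h w hw1 (le_trans hw2 hyv') hw3
  · exact h w' (le_trans hux hw'1) hw'2 hw'3




private lemma insert_max {a b : ℤ} {F : Set (ℤ × ℤ)} (hF : MaxCommFamily i a b F)
    {B : ℤ × ℤ} (hbox : IsBox i B.1 B.2) (hra : a ≤ B.1) (hrb : B.2 ≤ b)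
    (hall : ∀ C ∈ F, BoxCommute i B.1 B.2 C.1 C.2) : B ∈ F := by
  obtain ⟨⟨hboxes, hcomm⟩, hrange, hmax⟩ := hF
  have hG : CommFamily i (insert B F) := by
    constructor
    · intro r hr
      rcases Set.mem_insert_iff.mp hr with h | h
      · exact h ▸ hbox
      · exact hboxes r h
    · intro r hr s hs
      rcases Set.mem_insert_iff.mp hr with h | h <;> rcases Set.mem_insert_iff.mp hs with h' | h'
      · subst h; subst h'; exact boxCommute_self i _ _
      · subst h; exact hall s h'
      · subst h'; exact (hall r h).symm
      · exact hcomm r h s h'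
  have hGr : InRange a b (insert B F) := by
    intro r hr
    rcases Set.mem_insert_iff.mp hr with h | h
    · exact h ▸ ⟨hra, hrb⟩
    · exact hrange r h
  have := hmax (insert B F) hG hGr (Set.subset_insert _ _)
  rw [this]
  exact Set.mem_insert _ _

private lemma frozen_mem {a b : ℤ} {F : Set (ℤ × ℤ)} (hF : MaxCommFamily i a b F)
    (hj : ∃ s : ℤ, a ≤ s ∧ s ≤ b ∧ i s = j) :
    ∃ p ∈ F, i p.1 = j ∧ colorCount i j p.1 p.2 = colorCount i j a b := by
  set S := {s : ℤ | a ≤ s ∧ s ≤ b ∧ i s = j} with hS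
  have hSf : S.Finite := phi_finite i j a b
  obtain ⟨s₁, hs₁, hmin⟩ := Set.exists_min_image S id hSf hj
  obtain ⟨s₂, hs₂, hmax⟩ := Set.exists_max_image S id hSf hj
  have hs₁₂ : s₁ ≤ s₂ := hmin s₂ hs₂
  have hbox : IsBox i s₁ s₂ := ⟨hs₁₂, hs₁.2.2.trans hs₂.2.2.symm⟩
  have hall : ∀ C ∈ F, BoxCommute i s₁ s₂ C.1 C.2 := by
    intro C hC
    have hr := hF.2.1 C hC
    refine Or.inl ⟨fun t ht1 ht2 hit => ?_, fun t ht1 ht2 hit => ?_⟩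
    · have : t ∈ S := ⟨le_trans hr.1 ht1, le_trans ht2.le (le_trans hs₁₂ hs₂.2.1), hit.trans hs₁.2.2⟩
      exact absurd (hmin t this) (not_le.mpr ht2)
    · have : t ∈ S := ⟨le_trans hs₂.1 ht1.le, le_trans ht2 hr.2, hit.trans hs₂.2.2⟩
      exact absurd (hmax t this) (not_le.mpr ht1)
  have hmem : (s₁, s₂) ∈ F := insert_max hF hbox hs₁.1 hs₂.2.1 hall
  refine ⟨(s₁, s₂), hmem, hs₁.2.2, ?_⟩
  have : {s : ℤ | s₁ ≤ s ∧ s ≤ s₂ ∧ i s = j} = S := by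
    apply Set.eq_of_subset_of_ncard_le
    · intro t ht
      exact ⟨le_trans hs₁.1 ht.1, le_trans ht.2.1 hs₂.2.1, ht.2.2⟩
    · apply Set.ncard_le_ncard _ (phi_finite i j s₁ s₂)
      intro t ht
      exact ⟨hmin t ht, hmax t ht, ht.2.2⟩
    · exact hSf
  show _ = S.ncard
  rw [colorCount, this]

private lemma descent {a b : ℤ} {F : Set (ℤ × ℤ)} (hF : MaxCommFamily i a b F)
    {p : ℤ × ℤ} (hp : p ∈ F) (hpj : i p.1 = j) (h2 : 2 ≤ colorCount i j p.1 p.2) :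
    ∃ q ∈ F, i q.1 = j ∧ colorCount i j q.1 q.2 + 1 = colorCount i j p.1 p.2 := by
  obtain ⟨hxy0, hcol⟩ := hF.1.1 p hp
  have hyj : i p.2 = j := hcol.symm.trans hpj
  have hxy : p.1 < p.2 := by
    rcases lt_or_eq_of_le hxy0 with h | h
    · exact h
    · exfalso
      have hle : colorCount i j p.1 p.2 ≤ 1 := by
        rw [colorCount]
        calc {s : ℤ | p.1 ≤ s ∧ s ≤ p.2 ∧ i s = j}.ncard ≤ ({p.1} : Set ℤ).ncard := by
              apply Set.ncard_le_ncard _ (Set.finite_singleton _)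
              intro t ht
              have : t = p.1 := le_antisymm (h ▸ ht.2.1) ht.1
              simp [this]
          _ = 1 := Set.ncard_singleton _
      omega
  -- next same-color position after p.1
  have hT1f : {t : ℤ | p.1 < t ∧ t ≤ p.2 ∧ i t = j}.Finite :=
    (Set.finite_Icc p.1 p.2).subset fun t ht => Set.mem_Icc.mpr ⟨ht.1.le, ht.2.1⟩
  obtain ⟨x', hx'mem, hx'min⟩ := Set.exists_min_image _ id hT1f ⟨p.2, hxy, le_rfl, hyj⟩
  have hNx : NextSame i p.1 x' := by
    refine ⟨hx'mem.1, hx'mem.2.2.trans hpj.symm, fun t ht1 ht2 hit => ?_⟩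
    have : t ∈ {t : ℤ | p.1 < t ∧ t ≤ p.2 ∧ i t = j} :=
      ⟨ht1, le_trans ht2.le hx'mem.2.1, hit.trans hpj⟩
    exact absurd (hx'min t this) (not_le.mpr ht2)
  -- previous same-color position before p.2
  have hT2f : {t : ℤ | p.1 ≤ t ∧ t < p.2 ∧ i t = j}.Finite :=
    (Set.finite_Icc p.1 p.2).subset fun t ht => Set.mem_Icc.mpr ⟨ht.1, ht.2.1.le⟩
  obtain ⟨y'', hy''mem, hy''max⟩ := Set.exists_max_image _ id hT2f ⟨p.1, le_rfl, hxy, hpj⟩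
  have hPy : PrevSame i p.2 y'' := by
    refine ⟨hy''mem.2.1, hy''mem.2.2.trans hyj.symm, fun t ht1 ht2 hit => ?_⟩
    have : t ∈ {t : ℤ | p.1 ≤ t ∧ t < p.2 ∧ i t = j} :=
      ⟨le_trans hy''mem.1 ht1.le, ht2, hit.trans hyj⟩
    exact absurd (hy''max t this) (not_le.mpr ht1)
  -- counts of the two candidate boxes
  have hxmem : p.1 ∈ {s : ℤ | p.1 ≤ s ∧ s ≤ p.2 ∧ i s = j} := ⟨le_rfl, hxy0, hpj⟩
  have hymem : p.2 ∈ {s : ℤ | p.1 ≤ s ∧ s ≤ p.2 ∧ i s = j} := ⟨hxy0, le_rfl, hyj⟩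
  have hphi1 : {s : ℤ | x' ≤ s ∧ s ≤ p.2 ∧ i s = j}
      = {s : ℤ | p.1 ≤ s ∧ s ≤ p.2 ∧ i s = j} \ {p.1} := by
    ext s
    constructor
    · intro hs
      exact ⟨⟨le_trans hNx.1.le hs.1, hs.2.1, hs.2.2⟩,
        by simp only [Set.mem_singleton_iff]; have h1 := hs.1; have h2 := hNx.1; omega⟩
    · rintro ⟨⟨h1, h2, h3⟩, h4⟩
      simp only [Set.mem_singleton_iff] at h4
      have : s ∈ {t : ℤ | p.1 < t ∧ t ≤ p.2 ∧ i t = j} := ⟨lt_of_le_of_ne h1 (Ne.symm h4), h2, h3⟩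
      exact ⟨hx'min s this, h2, h3⟩
  have hc1 : colorCount i j x' p.2 + 1 = colorCount i j p.1 p.2 := by
    rw [colorCount, colorCount, hphi1]
    exact Set.ncard_diff_singleton_add_one hxmem (phi_finite i j p.1 p.2)
  have hphi2 : {s : ℤ | p.1 ≤ s ∧ s ≤ y'' ∧ i s = j}
      = {s : ℤ | p.1 ≤ s ∧ s ≤ p.2 ∧ i s = j} \ {p.2} := by
    ext s
    constructor
    · intro hs
      exact ⟨⟨hs.1, le_trans hs.2.1 hPy.1.le, hs.2.2⟩,
        by simp only [Set.mem_singleton_iff]; have h1 := hs.2.1; have h2 := hPy.1; omega⟩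
    · rintro ⟨⟨h1, h2, h3⟩, h4⟩
      simp only [Set.mem_singleton_iff] at h4
      have : s ∈ {t : ℤ | p.1 ≤ t ∧ t < p.2 ∧ i t = j} := ⟨h1, lt_of_le_of_ne h2 h4, h3⟩
      exact ⟨h1, hy''max s this, h3⟩
  have hc2 : colorCount i j p.1 y'' + 1 = colorCount i j p.1 p.2 := by
    rw [colorCount, colorCount, hphi2]
    exact Set.ncard_diff_singleton_add_one hymem (phi_finite i j p.1 p.2)
  by_cases hall1 : ∀ C ∈ F, BoxCommute i x' p.2 C.1 C.2
  · have hmem : (x', p.2) ∈ F :=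
      insert_max hF ⟨hx'mem.2.1, hNx.2.1.trans hcol⟩
        (le_trans (hF.2.1 p hp).1 hNx.1.le) (hF.2.1 p hp).2 hall1
    exact ⟨(x', p.2), hmem, hNx.2.1.trans hpj, hc1⟩
  by_cases hall2 : ∀ C ∈ F, BoxCommute i p.1 y'' C.1 C.2
  · have hmem : (p.1, y'') ∈ F :=
      insert_max hF ⟨hy''mem.1, hpj.trans (hPy.2.1.trans hyj).symm⟩
        (hF.2.1 p hp).1 (le_trans hPy.1.le (hF.2.1 p hp).2) hall2
    exact ⟨(p.1, y''), hmem, hpj, hc2⟩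
  exfalso
  push_neg at hall1 hall2
  obtain ⟨C, hC, hnC⟩ := hall1
  obtain ⟨C', hC', hnC'⟩ := hall2
  exact exchange hNx hPy (hF.1.2 p hp C hC) (hF.1.2 p hp C' hC') hnC hnC'
    (hF.1.2 C hC C' hC')

end Aux

/-- Structure of `F_j`: unique increasing enumeration, whose top box `[a(j)⁺, b(j)⁻]` is the
unique frozen box of color `j`. -/
theorem structure_Fj (i : ℤ → I) (a b : ℤ) (hab : a ≤ b)
    (F : Set (ℤ × ℤ)) (hF : MaxCommFamily i a b F) (j : I)
    (hj : ∃ s : ℤ, a ≤ s ∧ s ≤ b ∧ i s = j) :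
    ∃ f : ℕ → ℤ × ℤ, Enum i a b j F (colorCount i j a b) f ∧
      (∀ p ∈ F, i p.1 = j → Frozen i a b p → p = f (colorCount i j a b)) ∧
      ∀ g : ℕ → ℤ × ℤ, Enum i a b j F (colorCount i j a b) g →
        ∀ k : ℕ, 1 ≤ k → k ≤ colorCount i j a b → g k = f k := by
  classical
  have hm1 : 1 ≤ colorCount i j a b := by
    have hne : ({s : ℤ | a ≤ s ∧ s ≤ b ∧ i s = j}).Nonempty := hj
    have := (Set.ncard_pos (phi_finite i j a b)).mpr hne
    rw [colorCount]
    omega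
  set m := colorCount i j a b with hmdef
  have hexists : ∀ d : ℕ, d + 1 ≤ m → ∃ p ∈ F, i p.1 = j ∧ colorCount i j p.1 p.2 = m - d := by
    intro d
    induction d with
    | zero =>
      intro _
      obtain ⟨p, hp, h1, h2⟩ := frozen_mem hF hj
      exact ⟨p, hp, h1, by omega⟩
    | succ d ih =>
      intro hd
      obtain ⟨p, hp, h1, h2⟩ := ih (by omega)
      have h2' : 2 ≤ colorCount i j p.1 p.2 := by omega
      obtain ⟨q, hq, hq1, hq2⟩ := descent hF hp h1 h2'
      exact ⟨q, hq, hq1, by omega⟩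
  have hex : ∀ k : ℕ, 1 ≤ k → k ≤ m → ∃ p, p ∈ F ∧ i p.1 = j ∧ colorCount i j p.1 p.2 = k := by
    intro k h1 h2
    obtain ⟨p, hp, ha, hb⟩ := hexists (m - k) (by omega)
    exact ⟨p, hp, ha, by omega⟩
  set f : ℕ → ℤ × ℤ := fun k =>
    if h : ∃ p, p ∈ F ∧ i p.1 = j ∧ colorCount i j p.1 p.2 = k then h.choose else (a, a) with hfdef
  have hfs : ∀ k : ℕ, 1 ≤ k → k ≤ m →
      f k ∈ F ∧ i (f k).1 = j ∧ colorCount i j (f k).1 (f k).2 = k := by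
    intro k h1 h2
    have h := hex k h1 h2
    simp only [hfdef, dif_pos h]
    exact h.choose_spec
  have hcount_ge : ∀ p ∈ F, i p.1 = j → 1 ≤ colorCount i j p.1 p.2 := by
    intro p hp hpj
    have hb := hF.1.1 p hp
    have hne : ({s : ℤ | p.1 ≤ s ∧ s ≤ p.2 ∧ i s = j}).Nonempty := ⟨p.1, le_rfl, hb.1, hpj⟩
    have := (Set.ncard_pos (phi_finite i j p.1 p.2)).mpr hne
    rw [colorCount]
    omega
  have hcount_le : ∀ p ∈ F, colorCount i j p.1 p.2 ≤ m := by
    intro p hp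
    have hr := hF.2.1 p hp
    rw [hmdef, colorCount, colorCount]
    apply Set.ncard_le_ncard _ (phi_finite i j a b)
    intro t ht
    exact ⟨le_trans hr.1 ht.1, le_trans ht.2.1 hr.2, ht.2.2⟩
  have henum_set : {p ∈ F | i p.1 = j} = {p | ∃ k : ℕ, 1 ≤ k ∧ k ≤ m ∧ f k = p} := by
    ext p
    simp only [Set.mem_setOf_eq, Set.mem_sep_iff]
    constructor
    · rintro ⟨hp, hpj⟩
      refine ⟨colorCount i j p.1 p.2, hcount_ge p hp hpj, hcount_le p hp, ?_⟩
      obtain ⟨hf1, hf2, hf3⟩ := hfs _ (hcount_ge p hp hpj) (hcount_le p hp)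
      exact eq_of_count hF.1 hf1 hp hf2 hpj hf3
    · rintro ⟨k, h1, h2, rfl⟩
      obtain ⟨hf1, hf2, _⟩ := hfs k h1 h2
      exact ⟨hf1, hf2⟩
  have hstep : ∀ k : ℕ, 1 ≤ k → k < m →
      (NextSame i (f (k + 1)).1 (f k).1 ∧ (f k).2 = (f (k + 1)).2) ∨
      ((f k).1 = (f (k + 1)).1 ∧ PrevSame i (f (k + 1)).2 (f k).2) := by
    intro k h1 h2
    obtain ⟨hpF, hpj, hpc⟩ := hfs k h1 (by omega)
    obtain ⟨hqF, hqj, hqc⟩ := hfs (k + 1) (by omega) (by omega)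
    set p := f k
    set q := f (k + 1)
    have hbp := hF.1.1 p hpF
    have hbq := hF.1.1 q hqF
    have hnest : q.1 ≤ p.1 ∧ p.2 ≤ q.2 := by
      rcases nested hF.1 hpF hqF hpj hqj with ⟨ha, hb⟩ | h
      · exfalso
        have : colorCount i j q.1 q.2 ≤ colorCount i j p.1 p.2 :=
          Set.ncard_le_ncard (fun t ht => ⟨le_trans ha ht.1, le_trans ht.2.1 hb, ht.2.2⟩)
            (phi_finite i j p.1 p.2)
        omega
      · exact h
    obtain ⟨hq1, hq2⟩ := hnest
    have hsubphi : {s : ℤ | p.1 ≤ s ∧ s ≤ p.2 ∧ i s = j} ⊆ {s : ℤ | q.1 ≤ s ∧ s ≤ q.2 ∧ i s = j} :=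
      fun t ht => ⟨le_trans hq1 ht.1, le_trans ht.2.1 hq2, ht.2.2⟩
    have hq2j : i q.2 = j := hbq.2.symm.trans hqj
    have hp2j : i p.2 = j := hbp.2.symm.trans hpj
    rcases lt_or_eq_of_le hq1 with hlt | heq
    · left
      have hnotmem : q.1 ∉ {s : ℤ | p.1 ≤ s ∧ s ≤ p.2 ∧ i s = j} :=
        fun h => absurd h.1 (not_le.mpr hlt)
      have hins : insert q.1 {s : ℤ | p.1 ≤ s ∧ s ≤ p.2 ∧ i s = j}
          = {s : ℤ | q.1 ≤ s ∧ s ≤ q.2 ∧ i s = j} := by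
        apply Set.eq_of_subset_of_ncard_le
        · intro t ht
          rcases Set.mem_insert_iff.mp ht with rfl | ht'
          · exact ⟨le_rfl, hbq.1, hqj⟩
          · exact hsubphi ht'
        · rw [Set.ncard_insert_of_notMem hnotmem (phi_finite i j p.1 p.2)]
          rw [colorCount] at hpc hqc
          omega
        · exact phi_finite i j q.1 q.2
      have hy : p.2 = q.2 := by
        have hmem2 : q.2 ∈ insert q.1 {s : ℤ | p.1 ≤ s ∧ s ≤ p.2 ∧ i s = j} := by
          rw [hins]; exact ⟨hbq.1, le_rfl, hq2j⟩
        rcases Set.mem_insert_iff.mp hmem2 with h | h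
        · exfalso
          have hle : colorCount i j q.1 q.2 ≤ 1 := by
            rw [colorCount]
            calc {s : ℤ | q.1 ≤ s ∧ s ≤ q.2 ∧ i s = j}.ncard ≤ ({q.1} : Set ℤ).ncard := by
                  apply Set.ncard_le_ncard _ (Set.finite_singleton _)
                  intro t ht
                  have htq : t = q.1 := le_antisymm (h ▸ ht.2.1) ht.1
                  simp [htq]
              _ = 1 := Set.ncard_singleton _
          omega
        · exact le_antisymm hq2 h.2.1
      refine ⟨⟨hlt, hpj.trans hqj.symm, fun t ht1 ht2 hit => ?_⟩, hy⟩
      have htq : t ∈ {s : ℤ | q.1 ≤ s ∧ s ≤ q.2 ∧ i s = j} :=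
        ⟨ht1.le, le_trans (le_trans ht2.le hbp.1) hq2, hit.trans hqj⟩
      rw [← hins] at htq
      rcases Set.mem_insert_iff.mp htq with h | h
      · omega
      · exact absurd h.1 (not_le.mpr ht2)
    · right
      have hx : p.1 = q.1 := heq.symm
      have hlt2 : p.2 < q.2 := by
        rcases lt_or_eq_of_le hq2 with h | h
        · exact h
        · exfalso
          have hpq : p = q := Prod.ext hx h
          rw [hpq] at hpc
          omega
      have hnotmem : q.2 ∉ {s : ℤ | p.1 ≤ s ∧ s ≤ p.2 ∧ i s = j} :=
        fun h => absurd h.2.1 (not_le.mpr hlt2)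
      have hins : insert q.2 {s : ℤ | p.1 ≤ s ∧ s ≤ p.2 ∧ i s = j}
          = {s : ℤ | q.1 ≤ s ∧ s ≤ q.2 ∧ i s = j} := by
        apply Set.eq_of_subset_of_ncard_le
        · intro t ht
          rcases Set.mem_insert_iff.mp ht with rfl | ht'
          · exact ⟨hbq.1, le_rfl, hq2j⟩
          · exact hsubphi ht'
        · rw [Set.ncard_insert_of_notMem hnotmem (phi_finite i j p.1 p.2)]
          rw [colorCount] at hpc hqc
          omega
        · exact phi_finite i j q.1 q.2
      refine ⟨hx, hlt2, hp2j.trans hq2j.symm, fun t ht1 ht2 hit => ?_⟩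
      have htq : t ∈ {s : ℤ | q.1 ≤ s ∧ s ≤ q.2 ∧ i s = j} := by
        refine ⟨?_, ht2.le, hit.trans hq2j⟩
        rw [← hx]
        exact le_trans hbp.1 ht1.le
      rw [← hins] at htq
      rcases Set.mem_insert_iff.mp htq with h | h
      · omega
      · exact absurd h.2.1 (not_le.mpr ht1)
  have hfm := hfs m hm1 le_rfl
  have hphim : {s : ℤ | (f m).1 ≤ s ∧ s ≤ (f m).2 ∧ i s = j}
      = {s : ℤ | a ≤ s ∧ s ≤ b ∧ i s = j} := by
    apply Set.eq_of_subset_of_ncard_le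
    · intro t ht
      have hr := hF.2.1 _ hfm.1
      exact ⟨le_trans hr.1 ht.1, le_trans ht.2.1 hr.2, ht.2.2⟩
    · have e1 : colorCount i j (f m).1 (f m).2 = m := hfm.2.2
      rw [colorCount] at e1
      rw [e1, hmdef, colorCount]
    · exact phi_finite i j a b
  have hlast : a ≤ (f m).1 ∧ i (f m).1 = j ∧ (∀ t : ℤ, a ≤ t → t < (f m).1 → i t ≠ j) ∧
      (f m).2 ≤ b ∧ i (f m).2 = j ∧ ∀ t : ℤ, (f m).2 < t → t ≤ b → i t ≠ j := by
    have hr := hF.2.1 _ hfm.1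
    have hb' := hF.1.1 _ hfm.1
    refine ⟨hr.1, hfm.2.1, fun t ht1 ht2 hit => ?_, hr.2, hb'.2.symm.trans hfm.2.1,
      fun t ht1 ht2 hit => ?_⟩
    · have hmem : t ∈ {s : ℤ | a ≤ s ∧ s ≤ b ∧ i s = j} :=
        ⟨ht1, by have := hr.2; have := hb'.1; omega, hit⟩
      rw [← hphim] at hmem
      exact absurd hmem.1 (not_le.mpr ht2)
    · have hmem : t ∈ {s : ℤ | a ≤ s ∧ s ≤ b ∧ i s = j} :=
        ⟨by have := hr.1; have := hb'.1; omega, ht2, hit⟩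
      rw [← hphim] at hmem
      exact absurd hmem.2.1 (not_le.mpr ht1)
  refine ⟨f, ⟨henum_set, fun k h1 h2 => (hfs k h1 h2).2.2, hstep, hlast⟩, ?_, ?_⟩
  · intro p hp hpj hfr
    have hb' := hF.1.1 p hp
    have hr := hF.2.1 p hp
    have hphi : {s : ℤ | p.1 ≤ s ∧ s ≤ p.2 ∧ i s = j} = {s : ℤ | a ≤ s ∧ s ≤ b ∧ i s = j} := by
      apply Set.Subset.antisymm
      · intro t ht
        exact ⟨le_trans hr.1 ht.1, le_trans ht.2.1 hr.2, ht.2.2⟩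
      · intro t ht
        have h1 : p.1 ≤ t := by
          by_contra h
          exact hfr.1 t ht.1 (lt_of_not_ge h) (ht.2.2.trans hpj.symm)
        have h2 : t ≤ p.2 := by
          by_contra h
          exact hfr.2 t (lt_of_not_ge h) ht.2.1 (ht.2.2.trans (hb'.2.symm.trans hpj).symm)
        exact ⟨h1, h2, ht.2.2⟩
    have hcp : colorCount i j p.1 p.2 = m := by
      rw [colorCount, hphi, hmdef]
      rfl
    exact eq_of_count hF.1 hp hfm.1 hpj hfm.2.1 (by rw [hcp, hfm.2.2])
  · intro g hg k h1 h2
    have hgk : g k ∈ F ∧ i (g k).1 = j := by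
      have hmem : g k ∈ {p : ℤ × ℤ | ∃ k' : ℕ, 1 ≤ k' ∧ k' ≤ m ∧ g k' = p} := ⟨k, h1, h2, rfl⟩
      rw [← hg.1] at hmem
      exact hmem
    exact eq_of_count hF.1 hgk.1 (hfs k h1 h2).1 hgk.2 (hfs k h1 h2).2.1
      (by rw [hg.2.1 k h1 h2, (hfs k h1 h2).2.2])


end IBoxes
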